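/- Every A ∈ GL(4,ℂ) satisfying F∘A = c·F for some nonzero c ∈ ℂ factors uniquely as A = Δ·P_σ, where Δ is an invertible diagonal matrix with Δ₀₀Δ₁₁Δ₂₂ = Δ₃₃³, σ is a permutation of {0,1,2}, and P_σ is the 4×4 permutation matrix acting by σ on the first three coordinates and fixing the last coordinate. Moreover each P_σ itself satisfies F∘P_σ = F. (This realizes the semidirect product decomposition GL(S_{3A₂}) ≅ D ⋊ S₃, where D is the group of diagonal matrices diag(λ₀,λ₁,λ₂,λ₃) with λ₀λ₁λ₂ = λ₃³ and S₃ permutes the first three coordinates.) -/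

import Mathlib

open MvPolynomial

/-- The defining cubic form of the 3A₂ cubic surface: F = x₀x₁x₂ + x₃³. -/
noncomputable def F3A2 : MvPolynomial (Fin 4) ℂ :=
  X 0 * X 1 * X 2 + X 3 ^ 3

/-- The substitution action: (P∘A)(x) = P(A·x), i.e. xⱼ ↦ Σₖ Aⱼₖ·xₖ. -/
noncomputable def actM (A : Matrix (Fin 4) (Fin 4) ℂ) (P : MvPolynomial (Fin 4) ℂ) :
    MvPolynomial (Fin 4) ℂ :=
  MvPolynomial.aeval (fun j => ∑ k : Fin 4, MvPolynomial.C (A j k) * MvPolynomial.X k) P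

/-- The extension of a permutation σ of {0,1,2} to {0,1,2,3} fixing 3. -/
def extFun (σ : Equiv.Perm (Fin 3)) : Fin 4 → Fin 4 :=
  fun i => if h : (i : ℕ) < 3 then Fin.castSucc (σ ⟨i, h⟩) else i

/-- The 4×4 permutation matrix acting by σ on the first three coordinates and fixing
the last coordinate: its j-th column is the standard basis vector e_{σ(j)} (j < 3),
and its last column is e₃. -/
def permMat (σ : Equiv.Perm (Fin 3)) : Matrix (Fin 4) (Fin 4) ℂ :=
  Matrix.of fun i j => if i = extFun σ j then 1 else 0

/-!
The singular locus of F is the union of the three coordinate axes through e₀, e₁, e₂. Polarizing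
F(Ax) = c·F(x) gives dF_{Au}(Az) = c·dF_u(z), so an invertible A maps singular points to singular
points: A sends each eⱼ (j < 3) to a multiple of some e_{σ(j)}, and invertibility makes σ a
permutation. Since F∘P_σ = F, the matrix D = A·P_σ⁻¹ satisfies the same identity and has its first
three columns diagonal; evaluating F and its polarization at a few points then kills the rest of
its last column and gives D₀₀D₁₁D₂₂ = c = D₃₃³.
-/

open Matrix Equiv

theorem Matrix.eq_of_cols_supported_in_row {n R : Type*} [Fintype n] [DecidableEq n] [CommRing R]
    [Nontrivial R] {A B : Matrix n n R} (hBA : B * A = 1) {i j k : n}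
    (hi : ∀ r, r ≠ k → A r i = 0) (hj : ∀ r, r ≠ k → A r j = 0) : i = j := by
  have hmul : ∀ a b, (∀ r, r ≠ k → A r b = 0) → (B * A) a b = B a k * A k b := fun a b hb =>
    (mul_apply ..).trans <| Finset.sum_eq_single k (fun r _ hr => by rw [hb r hr, mul_zero])
      (fun h => absurd (Finset.mem_univ k) h)
  by_contra hij
  have hii : B i k * A k i = 1 := by rw [← hmul i i hi, hBA, one_apply_eq]
  have hij' : B i k * A k j = 0 := by rw [← hmul i j hj, hBA, one_apply_ne hij]
  have hjj : B j k * A k j = 1 := by rw [← hmul j j hj, hBA, one_apply_eq]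
  have hkj : A k j = 0 := by linear_combination -A k j * hii + A k i * hij'
  exact one_ne_zero (hjj.symm.trans (by rw [hkj, mul_zero]))

section CubicForm

variable {R : Type*} [CommRing R]

def f3A2 (x : Fin 4 → R) : R := x 0 * x 1 * x 2 + x 3 ^ 3

/-- The derivative of `f3A2` at `u` in the direction `z`: the singular points of `f3A2` are the
`u` for which it vanishes in every direction. -/
def polar3A2 (u z : Fin 4 → R) : R :=
  z 0 * u 1 * u 2 + u 0 * z 1 * u 2 + u 0 * u 1 * z 2 + 3 * u 3 ^ 2 * z 3

theorem polar3A2_single_castSucc (k : Fin 3) (z : Fin 4 → R) :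
    polar3A2 (Pi.single k.castSucc 1) z = 0 := by
  fin_cases k <;> simp [polar3A2]

variable {K : Type*} [Field K] [CharZero K] {A : Matrix (Fin 4) (Fin 4) K} {c : K}

theorem polar3A2_mulVec (hA : ∀ x, f3A2 (A *ᵥ x) = c * f3A2 x) (u z : Fin 4 → K) :
    polar3A2 (A *ᵥ u) (A *ᵥ z) = c * polar3A2 u z := by
  have h : ∀ t : K, _ := fun t => hA (u + t • z)
  simp only [mulVec_add, mulVec_smul, Pi.add_apply, Pi.smul_apply, smul_eq_mul, f3A2] at h
  unfold polar3A2
  -- the coefficient of `t` in `f3A2 (A *ᵥ (u + t • z))`, isolated by differences at `t = ±1, ±2`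
  linear_combination (8 * (h 1 - h (-1)) - (h 2 - h (-2))) / 12

theorem exists_support_of_polar3A2_eq_zero {u : Fin 4 → K} (hu : ∀ z, polar3A2 u z = 0) :
    ∃ k : Fin 3, ∀ i, i ≠ k.castSucc → u i = 0 := by
  have h12 : u 1 * u 2 = 0 := by simpa [polar3A2] using hu (Pi.single 0 1)
  have h02 : u 0 * u 2 = 0 := by simpa [polar3A2] using hu (Pi.single 1 1)
  have h01 : u 0 * u 1 = 0 := by simpa [polar3A2] using hu (Pi.single 2 1)
  have h3 : u 3 = 0 := by simpa [polar3A2] using hu (Pi.single 3 1)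
  by_cases h0 : u 0 = 0 <;> by_cases h1 : u 1 = 0
  · exact ⟨2, fun i hi => by fin_cases i <;> simp_all⟩
  · exact ⟨1, fun i hi => by fin_cases i <;> simp_all⟩
  · exact ⟨0, fun i hi => by fin_cases i <;> simp_all⟩
  · simp_all

theorem exists_perm_cols_supported (hA : IsUnit A.det) (hF : ∀ x, f3A2 (A *ᵥ x) = c * f3A2 x) :
    ∃ σ : Perm (Fin 3), ∀ j i, i ≠ (σ j).castSucc → A i j.castSucc = 0 := by
  have hcol : ∀ j : Fin 3, ∃ k : Fin 3, ∀ i, i ≠ k.castSucc → A i j.castSucc = 0 := by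
    intro j
    simp only [← col_apply A, ← mulVec_single_one]
    refine exists_support_of_polar3A2_eq_zero fun z => ?_
    obtain ⟨w, rfl⟩ := mulVec_surjective_iff_isUnit.2 ((isUnit_iff_isUnit_det A).2 hA) z
    rw [polar3A2_mulVec hF, polar3A2_single_castSucc, mul_zero]
  choose τ hτ using hcol
  have hτ_inj : Function.Injective τ := fun i j hij => Fin.castSucc_injective _ <|
    eq_of_cols_supported_in_row (nonsing_inv_mul A hA) (hτ i) (hij ▸ hτ j)
  exact ⟨Equiv.ofBijective τ hτ_inj.bijective_of_finite, hτ⟩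

theorem isDiag_of_f3A2_mulVec (hc : c ≠ 0) (hF : ∀ x, f3A2 (A *ᵥ x) = c * f3A2 x)
    (hA : ∀ i j : Fin 4, j ≠ 3 → i ≠ j → A i j = 0) :
    A.IsDiag ∧ (∀ i, A i i ≠ 0) ∧ A 0 0 * A 1 1 * A 2 2 = A 3 3 ^ 3 := by
  have hprod : A 0 0 * A 1 1 * A 2 2 = c := by
    simpa [f3A2, mulVec, dotProduct, Fin.sum_univ_four, hA] using hF ![1, 1, 1, 0]
  have hdiag_ne : A 0 0 ≠ 0 ∧ A 1 1 ≠ 0 ∧ A 2 2 ≠ 0 := by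
    have h : A 0 0 * A 1 1 * A 2 2 ≠ 0 := hprod ▸ hc
    simpa only [mul_ne_zero_iff, and_assoc] using h
  have hA3 : ∀ i, i ≠ 3 → A i 3 = 0 := by
    intro i hi
    have h := polar3A2_mulVec hF (![1, 1, 1, 0] - Pi.single i 1) (Pi.single 3 1)
    fin_cases i <;> simp_all [polar3A2, mulVec, dotProduct, Fin.sum_univ_four]
  have h3 : A 3 3 ^ 3 = c := by
    simpa [f3A2, mulVec, dotProduct, Fin.sum_univ_four, hA3] using hF (Pi.single 3 1)
  refine ⟨fun i j hij => ?_, fun i => ?_, hprod.trans h3.symm⟩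
  · by_cases hj : j = 3
    · subst hj; exact hA3 i hij
    · exact hA i j hj hij
  · have h33 : A 3 3 ≠ 0 := pow_ne_zero_iff three_ne_zero |>.1 (h3 ▸ hc)
    fin_cases i <;> simp [hdiag_ne, h33]

noncomputable def extPerm : Perm (Fin 3) →* Perm (Fin 4) :=
  Perm.viaEmbeddingHom Fin.castSuccEmb

theorem extPerm_castSucc (σ : Perm (Fin 3)) (k : Fin 3) :
    extPerm σ k.castSucc = (σ k).castSucc :=
  Perm.viaEmbedding_apply σ Fin.castSuccEmb k

theorem extPerm_three (σ : Perm (Fin 3)) : extPerm σ 3 = 3 :=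
  Perm.viaEmbedding_apply_of_notMem σ _ _ (by simp [Fin.range_castSucc])

theorem coe_extPerm (σ : Perm (Fin 3)) : ⇑(extPerm σ) = extFun σ := by
  funext i
  induction i using Fin.lastCases with
  | last => exact extPerm_three σ
  | cast k => rw [extPerm_castSucc]; simp [extFun]

theorem permMat_eq_permMatrix (σ : Perm (Fin 3)) :
    permMat σ = (extPerm σ)⁻¹.permMatrix ℂ := by
  ext i j
  simp [permMat, PEquiv.toMatrix_apply, Equiv.symm_apply_eq, coe_extPerm]

theorem permMat_mul (σ τ : Perm (Fin 3)) : permMat σ * permMat τ = permMat (σ * τ) := by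
  rw [permMat_eq_permMatrix, permMat_eq_permMatrix, permMat_eq_permMatrix, map_mul,
    _root_.mul_inv_rev, Matrix.permMatrix_mul]

theorem permMat_one : permMat 1 = 1 := by
  simp [permMat_eq_permMatrix]

theorem mul_permMat (M : Matrix (Fin 4) (Fin 4) ℂ) (σ : Perm (Fin 3)) :
    M * permMat σ = M.submatrix id (extPerm σ) := by
  rw [permMat_eq_permMatrix, PEquiv.mul_toMatrix_toPEquiv]; rfl

theorem permMat_mulVec (σ : Perm (Fin 3)) (x : Fin 4 → ℂ) :
    permMat σ *ᵥ x = x ∘ ⇑(extPerm σ)⁻¹ := by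
  rw [permMat_eq_permMatrix, Matrix.permMatrix_mulVec]

theorem diagonal_mul_permMat_apply (d : Fin 4 → ℂ) (σ : Perm (Fin 3)) (i j : Fin 4) :
    (diagonal d * permMat σ) i j = if i = extPerm σ j then d i else 0 := by
  simp [diagonal_mul, permMat, coe_extPerm]

theorem diagonal_mul_permMat_inj {d d' : Fin 4 → ℂ} {σ σ' : Perm (Fin 3)} (hd : ∀ i, d i ≠ 0)
    (h : diagonal d * permMat σ = diagonal d' * permMat σ') : d = d' ∧ σ = σ' := by
  have hσ : σ = σ' := by
    ext k
    have he := congr_fun₂ h (σ k).castSucc k.castSucc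
    simp only [diagonal_mul_permMat_apply, extPerm_castSucc, if_true] at he
    split_ifs at he with hk
    · exact congrArg Fin.val (Fin.castSucc_injective _ hk)
    · exact absurd he (hd _)
  subst hσ
  refine ⟨diagonal_injective ?_, rfl⟩
  simpa only [mul_assoc, permMat_mul, mul_inv_cancel, permMat_one, mul_one] using
    congrArg (· * permMat σ⁻¹) h

theorem eval_actM (A : Matrix (Fin 4) (Fin 4) ℂ) (P : MvPolynomial (Fin 4) ℂ) (x : Fin 4 → ℂ) :
    eval x (actM A P) = eval (A *ᵥ x) P := by
  rw [actM, aeval_eq_bind₁, eval, eval₂Hom_bind₁]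
  congr 1
  apply MvPolynomial.ringHom_ext <;> simp [mulVec, dotProduct]

theorem eval_F3A2 (x : Fin 4 → ℂ) : eval x F3A2 = f3A2 x := by
  simp [F3A2, f3A2]

theorem actM_F3A2_eq_smul_iff (A : Matrix (Fin 4) (Fin 4) ℂ) (c : ℂ) :
    actM A F3A2 = c • F3A2 ↔ ∀ x, f3A2 (A *ᵥ x) = c * f3A2 x := by
  simp only [MvPolynomial.funext_iff, eval_actM, smul_eq_C_mul, eval_mul, eval_C, eval_F3A2]

theorem f3A2_permMat_mulVec (σ : Perm (Fin 3)) (x : Fin 4 → ℂ) :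
    f3A2 (permMat σ *ᵥ x) = f3A2 x := by
  have hprod : ∏ k : Fin 3, x (extPerm σ⁻¹ k.castSucc) = ∏ k : Fin 3, x k.castSucc := by
    simp only [extPerm_castSucc]
    exact Equiv.prod_comp σ⁻¹ fun k => x k.castSucc
  simp only [Fin.prod_univ_three] at hprod
  simp only [permMat_mulVec, f3A2, Function.comp_apply, ← map_inv, extPerm_three]
  exact congrArg (· + x 3 ^ 3) hprod

theorem exists_diagonal_mul_permMat {A : Matrix (Fin 4) (Fin 4) ℂ} {c : ℂ} (hA : IsUnit A.det)
    (hc : c ≠ 0) (hF : ∀ x, f3A2 (A *ᵥ x) = c * f3A2 x) :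
    ∃ (d : Fin 4 → ℂ) (σ : Perm (Fin 3)),
      (∀ i, d i ≠ 0) ∧ d 0 * d 1 * d 2 = d 3 ^ 3 ∧ A = diagonal d * permMat σ := by
  obtain ⟨σ, hσ⟩ := exists_perm_cols_supported hA hF
  set D := A * permMat σ⁻¹ with hD
  have hAD : A = D * permMat σ := by
    rw [mul_assoc, permMat_mul, inv_mul_cancel, permMat_one, mul_one]
  have hDF : ∀ x, f3A2 (D *ᵥ x) = c * f3A2 x := fun x => by
    rw [← mulVec_mulVec, hF, f3A2_permMat_mulVec]
  have hDcols : ∀ i j : Fin 4, j ≠ 3 → i ≠ j → D i j = 0 := by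
    intro i j hj hij
    obtain ⟨k, rfl⟩ := Fin.exists_castSucc_eq.2 hj
    rw [hD, mul_permMat, submatrix_apply, id, extPerm_castSucc]
    exact hσ _ i (by simpa using hij)
  obtain ⟨hdiag, hne, hprod⟩ := isDiag_of_f3A2_mulVec hc hDF hDcols
  exact ⟨D.diag, σ, hne, hprod, by rw [hdiag.diagonal_diag, ← hAD]⟩

/-- Every A ∈ GL(4,ℂ) with F∘A = c·F (c ≠ 0) factors uniquely as A = Δ·P_σ with Δ an
invertible diagonal matrix satisfying Δ₀₀Δ₁₁Δ₂₂ = Δ₃₃³ and P_σ a permutation matrix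
permuting the first three coordinates; moreover F∘P_σ = F for every σ.
This realizes GL(S_{3A₂}) ≅ D ⋊ S₃. -/
theorem GL_stabilizer_semidirect_decomposition :
    (∀ σ : Equiv.Perm (Fin 3), actM (permMat σ) F3A2 = F3A2) ∧
    (∀ A : Matrix (Fin 4) (Fin 4) ℂ, IsUnit A.det →
      (∃ c : ℂ, c ≠ 0 ∧ actM A F3A2 = c • F3A2) →
      ∃! p : (Fin 4 → ℂ) × Equiv.Perm (Fin 3),
        (∀ i, p.1 i ≠ 0) ∧
        p.1 0 * p.1 1 * p.1 2 = p.1 3 ^ 3 ∧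
        A = Matrix.diagonal p.1 * permMat p.2) := by
  refine ⟨fun σ => MvPolynomial.funext fun x => ?_, ?_⟩
  · rw [eval_actM, eval_F3A2, eval_F3A2, f3A2_permMat_mulVec]
  rintro A hA ⟨c, hc, hAF⟩
  obtain ⟨d, σ, hd, hprod, rfl⟩ :=
    exists_diagonal_mul_permMat hA hc ((actM_F3A2_eq_smul_iff A c).1 hAF)
  refine ⟨(d, σ), ⟨hd, hprod, rfl⟩, ?_⟩
  rintro ⟨d', σ'⟩ ⟨hd', -, h⟩
  obtain ⟨rfl, rfl⟩ := diagonal_mul_permMat_inj hd' h.symm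
  rfl
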